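/- arXiv:2001.06687 — 7 statements merged into one kernel-verified Lean document; each statement's English description precedes it below -/
import Mathlib

section
/- With Q as in the Q-map construction, for m ≥ 3 and elements s, t₁,…,t_m: Q(s, t₁+⋯+t_m, h) = Σ_{1≤i<j≤m} Q(s, t_i + t_j, h) − (m−2)·Σ_{i=1}^m Q(s, t_i, h). -/
/-- The Q-map: `Q(s,t,h) = f(s·s·h)·f(t·t·h) − f(s·t·h)²`. -/
noncomputable def Qmap {k A B : Type*} [CommSemiring k] [CommRing A] [CommRing B]
    [Algebra k A] [Algebra k B] (f : A →ₗ[k] B) (s t h : A) : B :=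
  f (s * s * h) * f (t * t * h) - f (s * t * h) ^ 2

open Finset

lemma aux_swap {M : Type*} [AddCommMonoid M] (m : ℕ) (F : Fin m × Fin m → M) :
    ∑ p ∈ univ.filter (fun p : Fin m × Fin m => p.2 < p.1), F p
      = ∑ p ∈ univ.filter (fun p : Fin m × Fin m => p.1 < p.2), F p.swap := by
  apply Finset.sum_nbij' (fun p => p.swap) (fun p => p.swap) <;>
    simp [Prod.ext_iff]

lemma aux_partition {M : Type*} [AddCommMonoid M] (m : ℕ) (F : Fin m × Fin m → M) :
    ∑ p : Fin m × Fin m, F p =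
      ∑ p ∈ univ.filter (fun p : Fin m × Fin m => p.1 < p.2), F p
      + ∑ i, F (i, i)
      + ∑ p ∈ univ.filter (fun p : Fin m × Fin m => p.2 < p.1), F p := by
  rw [← Finset.sum_filter_add_sum_filter_not univ (fun p : Fin m × Fin m => p.1 < p.2) F]
  rw [← Finset.sum_filter_add_sum_filter_not (univ.filter (fun p : Fin m × Fin m => ¬ p.1 < p.2)) (fun p => p.1 = p.2) F]
  rw [Finset.filter_filter, Finset.filter_filter, add_assoc]
  congr 1
  congr 1
  · rw [show Finset.filter (fun a : Fin m × Fin m => ¬a.1 < a.2 ∧ a.1 = a.2) univ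
        = Finset.filter (fun a : Fin m × Fin m => a.1 = a.2) univ by
      ext p; simp only [mem_filter, mem_univ, true_and, and_iff_right_iff_imp]
      intro hp; omega]
    apply Finset.sum_nbij' (fun p => p.1) (fun i => (i, i)) <;>
      simp +contextual [Prod.ext_iff, eq_comm]
  · apply Finset.sum_congr
    · ext p; simp only [mem_filter, mem_univ, true_and]
      constructor
      · rintro ⟨h1, h2⟩
        rcases lt_trichotomy p.1 p.2 with h | h | h
        · exact absurd h h1
        · exact absurd h h2
        · exact h
      · intro hp; exact ⟨by omega, by omega⟩
    · intros; rfl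

/-- Symmetric double sum splits into diagonal plus twice the lower-triangle sum. -/
lemma aux_split {M : Type*} [AddCommMonoid M] (m : ℕ) (F : Fin m → Fin m → M)
    (hF : ∀ i j, F i j = F j i) :
    ∑ i, ∑ j, F i j = ∑ i, F i i
      + 2 • ∑ p ∈ univ.filter (fun p : Fin m × Fin m => p.1 < p.2), F p.1 p.2 := by
  rw [← Fintype.sum_prod_type', aux_partition m (fun p => F p.1 p.2),
    aux_swap m (fun p => F p.1 p.2)]
  simp only [Prod.fst_swap, Prod.snd_swap]
  rw [two_smul]
  have hs : ∑ p ∈ univ.filter (fun p : Fin m × Fin m => p.1 < p.2), F p.2 p.1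
      = ∑ p ∈ univ.filter (fun p : Fin m × Fin m => p.1 < p.2), F p.1 p.2 :=
    Finset.sum_congr rfl (fun p _ => hF p.2 p.1)
  rw [hs]
  abel

/-- Counting lemma: each index occurs `m-1` times among ordered pairs. -/
lemma aux_count {M : Type*} [AddCommGroup M] (m : ℕ) (hm : 1 ≤ m) (g : Fin m → M) :
    ∑ p ∈ univ.filter (fun p : Fin m × Fin m => p.1 < p.2), (g p.1 + g p.2)
      = (m - 1) • ∑ i, g i := by
  have h1 : ∑ p ∈ univ.filter (fun p : Fin m × Fin m => p.1 < p.2), g p.2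
      = ∑ p ∈ univ.filter (fun p : Fin m × Fin m => p.2 < p.1), g p.1 := by
    rw [aux_swap m (fun p => g p.1)]; rfl
  have h2 := aux_partition m (fun p : Fin m × Fin m => g p.1)
  simp only at h2
  have h3 : ∑ p : Fin m × Fin m, g p.1 = m • ∑ i, g i := by
    rw [Fintype.sum_prod_type]
    simp [Finset.sum_const, card_univ, Finset.smul_sum]
  rw [Finset.sum_add_distrib, h1]
  have hms : m • (∑ i, g i) = (m - 1) • (∑ i, g i) + (∑ i, g i) := by
    rw [← succ_nsmul]; congr 1; omega
  apply add_right_cancel (b := ∑ i, g i)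
  rw [← hms, ← h3, h2]
  abel

lemma Qmap_add {k A B : Type*} [CommSemiring k] [CommRing A] [CommRing B]
    [Algebra k A] [Algebra k B] (f : A →ₗ[k] B) (s h u v : A) :
    Qmap f s (u + v) h = Qmap f s u h + Qmap f s v h
      + 2 * (f (s * s * h) * f (u * v * h) - f (s * u * h) * f (s * v * h)) := by
  simp only [Qmap]
  rw [show (u + v) * (u + v) * h = u * u * h + (u * v * h + (u * v * h + v * v * h)) by ring,
      show s * (u + v) * h = s * u * h + s * v * h by ring]
  simp only [map_add]
  ring

/-- For `m ≥ 3`: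
`Q(s, t₁+⋯+t_m, h) = Σ_{i<j} Q(s, t_i + t_j, h) − (m−2)·Σ_i Q(s, t_i, h)`. -/
theorem stmt_4 {k A B : Type*} [Field k] [CommRing A] [CommRing B]
    [Algebra k A] [Algebra k B] (hchar : ringChar k ≠ 2)
    (f : A →ₗ[k] B) (m : ℕ) (hm : 3 ≤ m) (s h : A) (t : Fin m → A) :
    Qmap f s (∑ i, t i) h =
      (∑ p ∈ Finset.univ.filter (fun p : Fin m × Fin m => p.1 < p.2),
        Qmap f s (t p.1 + t p.2) h) -
      (m - 2) • ∑ i, Qmap f s (t i) h := by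
  classical
  set a : B := f (s * s * h) with ha
  set F : Fin m → Fin m → B :=
    fun i j => a * f (t i * t j * h) - f (s * t i * h) * f (s * t j * h) with hF
  have hFsymm : ∀ i j, F i j = F j i := by
    intro i j
    simp only [hF]
    rw [show t i * t j * h = t j * t i * h by ring]
    ring
  have hFdiag : ∀ i, F i i = Qmap f s (t i) h := by
    intro i; simp only [hF, Qmap, ha]; ring
  -- LHS expansion
  have e1 : (∑ i, t i) * (∑ i, t i) * h = ∑ i, ∑ j, (t i * t j * h) := by
    rw [Finset.sum_mul_sum]
    simp [Finset.sum_mul]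
  have e2 : s * (∑ i, t i) * h = ∑ i, (s * t i * h) := by
    rw [Finset.mul_sum, Finset.sum_mul]
  have hL : Qmap f s (∑ i, t i) h = ∑ i, ∑ j, F i j := by
    simp only [Qmap, e1, e2, map_sum, ← ha, hF]
    rw [sq, Finset.sum_mul_sum, Finset.mul_sum, ← Finset.sum_sub_distrib]
    refine Finset.sum_congr rfl fun i _ => ?_
    rw [Finset.mul_sum, ← Finset.sum_sub_distrib]
  rw [hL, aux_split m F hFsymm]
  simp only [hFdiag]
  -- RHS expansion
  have hR : ∑ p ∈ Finset.univ.filter (fun p : Fin m × Fin m => p.1 < p.2),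
        Qmap f s (t p.1 + t p.2) h
      = (m - 1) • ∑ i, Qmap f s (t i) h
        + ∑ p ∈ Finset.univ.filter (fun p : Fin m × Fin m => p.1 < p.2), 2 * F p.1 p.2 := by
    have step : ∀ p ∈ Finset.univ.filter (fun p : Fin m × Fin m => p.1 < p.2),
        Qmap f s (t p.1 + t p.2) h
          = (Qmap f s (t p.1) h + Qmap f s (t p.2) h) + 2 * F p.1 p.2 := by
      intro p _
      rw [Qmap_add]
    rw [Finset.sum_congr rfl step, Finset.sum_add_distrib,
      aux_count m (by omega) (fun i => Qmap f s (t i) h)]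
  rw [hR]
  have hsm : (m - 1) • (∑ i, Qmap f s (t i) h)
      = (m - 2) • (∑ i, Qmap f s (t i) h) + (∑ i, Qmap f s (t i) h) := by
    rw [← succ_nsmul]; congr 1; omega
  rw [hsm]
  have h2s : (2 : ℕ) • ∑ p ∈ Finset.univ.filter (fun p : Fin m × Fin m => p.1 < p.2), F p.1 p.2
      = ∑ p ∈ Finset.univ.filter (fun p : Fin m × Fin m => p.1 < p.2), 2 * F p.1 p.2 := by
    rw [Finset.smul_sum]
    exact Finset.sum_congr rfl fun p _ => by rw [nsmul_eq_mul]; norm_num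
  rw [← h2s]
  abel
end

section
/- With Q as in the Q-map construction, for all s,t,u,h: Q(s+u, t+u, h) = Q(s,u,h) + Q(t,u,h) + Q(s+u,t,h) + Q(t+u,s,h) − Q(s,t,h) − Q(s+t,u,h). -/
/-- `Q(s+u, t+u, h) = Q(s,u,h) + Q(t,u,h) + Q(s+u,t,h) + Q(t+u,s,h) − Q(s,t,h) − Q(s+t,u,h)`. -/
theorem stmt_5 {k A B : Type*} [Field k] [CommRing A] [CommRing B]
    [Algebra k A] [Algebra k B] (hchar : ringChar k ≠ 2)
    (f : A →ₗ[k] B) (s t u h : A) :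
    Qmap f (s + u) (t + u) h =
      Qmap f s u h + Qmap f t u h + Qmap f (s + u) t h + Qmap f (t + u) s h -
        Qmap f s t h - Qmap f (s + t) u h := by
  simp only [Qmap, add_mul, mul_add, map_add]
  ring
end

section
/- With Q as in the Q-map construction, the identity 2·Q(s,t,h) + 2·Q(s+t,u,h) = Q(s+t, s+u, h) + Q(s+t, t+u, h) holds for all s,t,u,h. -/
/-- The "common term" identity:
`2·Q(s,t,h) + 2·Q(s+t,u,h) = Q(s+t, s+u, h) + Q(s+t, t+u, h)`. -/
theorem stmt_6 {k A B : Type*} [Field k] [CommRing A] [CommRing B]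
    [Algebra k A] [Algebra k B] (hchar : ringChar k ≠ 2)
    (f : A →ₗ[k] B) (s t u h : A) :
    2 * Qmap f s t h + 2 * Qmap f (s + t) u h =
      Qmap f (s + t) (s + u) h + Qmap f (s + t) (t + u) h := by
  simp only [Qmap]
  rw [show (s+t)*(s+t)*h = s*s*h + s*t*h + s*t*h + t*t*h by ring,
      show (s+t)*u*h = s*u*h + t*u*h by ring,
      show (s+u)*(s+u)*h = s*s*h + s*u*h + s*u*h + u*u*h by ring,
      show (s+t)*(s+u)*h = s*s*h + s*t*h + s*u*h + t*u*h by ring,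
      show (t+u)*(t+u)*h = t*t*h + t*u*h + t*u*h + u*u*h by ring,
      show (s+t)*(t+u)*h = s*t*h + s*u*h + t*t*h + t*u*h by ring]
  simp only [map_add]
  ring
end

section
/- The homogeneous ideal of the rational normal curve C_d ⊂ P^d (d ≥ 2) is generated by quadrics of rank at most 3. Concretely, the ideal generated by { z_i z_{i+2} − z_{i+1}² : 0 ≤ i ≤ d−2 } ∪ { (z_i+z_j)(z_{i+2}+z_{j+2}) − (z_{i+1}+z_{j+1})² : 0 ≤ i < j ≤ d−2 } equals the full vanishing ideal of C_d, and each generator is a quadric of rank ≤ 3. -/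
/-!
The minors `z_a z_{b+1} - z_{a+1} z_b` lie in the ideal of the quadrics: `F_i` is the minor of
adjacent columns, and the minor of columns `a, a+g+2` is `G_{a,a+g+1} - F_a - F_{a+g+1}` plus the
minor of columns `a+1, a+g+1`, so induction on the gap applies.

Modulo the minors, a monomial `z_{a_1} ⋯ z_{a_n}` containing indices `a < c - 1` may have them
replaced by `a + 1, c - 1`. This strictly lowers `∑ a_i²`, so it ends at a multiset of indices any
two of which differ by at most one, and such a multiset is determined by its size `n` and sum `w`.
Hence monomials with the same degree and weight are congruent. Substituting `z_m = s^(d-m) t^m`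
sends a monomial to `s^(nd-w) t^w`, so a polynomial vanishing on the curve has zero coefficient
sum on each fibre of `(n, w)`, which puts it in the ideal of the minors.

Finally `ℓ₀ ℓ₂ - ℓ₁²` is `ℓᵀ B ℓ` for a `3 × 3` matrix `B`, so its matrix has rank at most `3`.
-/

open MvPolynomial Matrix

theorem Finsupp.weight_eq_sum_map_toMultiset {σ M : Type*} [AddCommMonoid M] (w : σ → M)
    (μ : σ →₀ ℕ) : Finsupp.weight w μ = (μ.toMultiset.map w).sum := by
  induction μ using Finsupp.induction with
  | zero => simp
  | single_add a n f _ _ ih =>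
    simp [ih, Finsupp.toMultiset_add, Finsupp.toMultiset_single, Finsupp.weight_single,
      Multiset.map_nsmul, Multiset.sum_nsmul]

theorem Finsupp.weight_apply_apply {σ τ M : Type*} [AddCommMonoid M] (w : σ → τ →₀ M)
    (μ : σ →₀ ℕ) (j : τ) :
    Finsupp.weight w μ j = Finsupp.weight (fun i => w i j) μ := by
  simp [Finsupp.weight_apply, Finsupp.sum_apply]

namespace MvPolynomial

section MapDomain

variable {σ τ N R : Type*}

theorem aeval_monomial_one_eq_mapDomain_weight [CommSemiring R] (w : σ → τ →₀ ℕ)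
    (p : MvPolynomial σ R) :
    aeval (fun i => monomial (w i) (1 : R)) p =
      AddMonoidAlgebra.mapDomain (Finsupp.weight w) p := by
  have : aeval (fun i => monomial (w i) (1 : R)) =
      AddMonoidAlgebra.mapDomainAlgHom R R (Finsupp.weight w) := by
    refine MvPolynomial.algHom_ext fun i => ?_
    rw [aeval_X, AddMonoidAlgebra.mapDomainAlgHom_apply, X, ← single_eq_monomial,
      ← single_eq_monomial, AddMonoidAlgebra.mapDomain_single, Finsupp.weight_single, one_smul]
  rw [this]
  rfl

theorem mapDomain_eq_sum [CommSemiring R] (f : (σ →₀ ℕ) → N) (p : MvPolynomial σ R) :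
    AddMonoidAlgebra.mapDomain f p =
      ∑ μ ∈ p.support, AddMonoidAlgebra.single (f μ) (coeff μ p) := by
  classical
  conv_lhs => rw [← support_sum_monomial_coeff p]
  induction p.support using Finset.induction_on with
  | empty => simp
  | insert a s ha ih =>
    rw [Finset.sum_insert ha, Finset.sum_insert ha, AddMonoidAlgebra.mapDomain_add, ih,
      ← single_eq_monomial, AddMonoidAlgebra.mapDomain_single]

theorem mem_of_mapDomain_eq_zero [CommRing R] {J : Ideal (MvPolynomial σ R)}
    (f : (σ →₀ ℕ) → N) (hJ : ∀ μ ν, f μ = f ν → monomial μ (1 : R) - monomial ν 1 ∈ J)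
    {p : MvPolynomial σ R} (hp : AddMonoidAlgebra.mapDomain f p = 0) : p ∈ J := by
  -- Moving each monomial of `p` to a fixed representative of its fibre changes `p` by binomials,
  -- and the moved polynomial factors through `mapDomain f p = 0`.
  set g := Function.invFun f ∘ f
  have hg : AddMonoidAlgebra.mapDomain g p = 0 := by
    have : AddMonoidAlgebra.mapDomain g p =
        AddMonoidAlgebra.mapDomain (Function.invFun f) (AddMonoidAlgebra.mapDomain f p) := by
      apply AddMonoidAlgebra.coeff_injective
      simp [g, Finsupp.mapDomain_comp]
    rw [this, hp, AddMonoidAlgebra.mapDomain_zero]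
  have hsub : p - AddMonoidAlgebra.mapDomain g p =
      ∑ μ ∈ p.support, C (coeff μ p) * (monomial μ 1 - monomial (g μ) 1) := by
    simp only [mapDomain_eq_sum, mul_sub, C_mul_monomial, mul_one, Finset.sum_sub_distrib,
      support_sum_monomial_coeff, single_eq_monomial]
  rw [← sub_zero p, ← hg, hsub]
  exact Ideal.sum_mem _ fun μ _ => Ideal.mul_mem_left _ _
    (hJ _ _ (Function.invFun_eq ⟨μ, rfl⟩).symm)

end MapDomain

section Rank

variable {σ ι k : Type*} [Fintype σ] [Fintype ι]

local notation "ℓ" => Fintype.linearCombination k (X : σ → MvPolynomial σ k)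

theorem sum_transpose_mul_mul_apply_smul_X_mul_X [CommSemiring k] (A : Matrix ι σ k)
    (B : Matrix ι ι k) :
    ∑ i, ∑ j, (Aᵀ * B * A) i j • (X i * X j : MvPolynomial σ k) =
      ∑ r, ∑ s, B r s • (ℓ (A r) * ℓ (A s)) := by
  simp only [Matrix.mul_apply, Matrix.transpose_apply, Finset.sum_mul, Finset.sum_smul,
    Fintype.linearCombination_apply, Finset.mul_sum, Finset.smul_sum, smul_mul_smul_comm,
    smul_smul]
  simp_rw [Finset.sum_comm (s := (Finset.univ : Finset σ)) (t := (Finset.univ : Finset ι))]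
  rw [Finset.sum_comm]
  refine Finset.sum_congr rfl fun r _ => Finset.sum_congr rfl fun s _ => ?_
  rw [Finset.sum_comm]
  refine Finset.sum_congr rfl fun j _ => Finset.sum_congr rfl fun i _ => ?_
  ring_nf

theorem exists_isSymm_rank_le_three [Field k] (h2 : (2 : k) ≠ 0) (u v w : σ → k) :
    ∃ M : Matrix σ σ k, M.IsSymm ∧ M.rank ≤ 3 ∧
      ℓ u * ℓ w - ℓ v ^ 2 = ∑ i, ∑ j, M i j • (X i * X j) := by
  set A : Matrix (Fin 3) σ k := ![u, v, w]
  set B : Matrix (Fin 3) (Fin 3) k := !![0, 0, 2⁻¹; 0, -1, 0; 2⁻¹, 0, 0]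
  have hB : Bᵀ = B := by ext i j; fin_cases i <;> fin_cases j <;> rfl
  refine ⟨Aᵀ * B * A, ?_, ?_, ?_⟩
  · rw [Matrix.IsSymm, Matrix.transpose_mul, Matrix.transpose_mul, Matrix.transpose_transpose, hB,
      Matrix.mul_assoc]
  · calc (Aᵀ * B * A).rank ≤ (Aᵀ * B).rank := Matrix.rank_mul_le_left _ _
      _ ≤ Fintype.card (Fin 3) := Matrix.rank_le_card_width _
      _ = 3 := Fintype.card_fin 3
  · rw [sum_transpose_mul_mul_apply_smul_X_mul_X]
    have h : (C 2⁻¹ : MvPolynomial σ k) * 2 = 1 := by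
      rw [← map_ofNat C 2, ← C_mul, inv_mul_cancel₀ h2, C_1]
    simp [Fin.sum_univ_three, A, B, smul_eq_C_mul]
    linear_combination -(ℓ u * ℓ w) * h

end Rank

end MvPolynomial

namespace RationalNormalCurve

section Minors

variable {R : Type*} [CommRing R] (x : ℕ → R) (d : ℕ)

def quadrics : Set R :=
  {f | ∃ i, i + 2 ≤ d ∧ f = x i * x (i + 2) - x (i + 1) ^ 2} ∪
    {f | ∃ i j, i < j ∧ j + 2 ≤ d ∧
      f = (x i + x j) * (x (i + 2) + x (j + 2)) - (x (i + 1) + x (j + 1)) ^ 2}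

def minors : Set R :=
  {f | ∃ a b, a ≤ b ∧ b < d ∧ f = x a * x (b + 1) - x (a + 1) * x b}

theorem minor_mem_span_minors {a b : ℕ} (hab : a ≤ b) (hb : b < d) :
    x a * x (b + 1) - x (a + 1) * x b ∈ Ideal.span (minors x d) :=
  Ideal.subset_span ⟨a, b, hab, hb, rfl⟩

theorem span_quadrics_le_span_minors : Ideal.span (quadrics x d) ≤ Ideal.span (minors x d) := by
  refine Ideal.span_le.2 ?_
  rintro f (⟨i, hi, rfl⟩ | ⟨i, j, hij, hj, rfl⟩) <;> rw [SetLike.mem_coe]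
  · convert minor_mem_span_minors x d (a := i) (b := i + 1) (by omega) (by omega) using 1
    ring
  · have hi := minor_mem_span_minors x d (a := i) (b := i + 1) (by omega) (by omega)
    have hj := minor_mem_span_minors x d (a := j) (b := j + 1) (by omega) (by omega)
    have hij' := minor_mem_span_minors x d (a := i) (b := j + 1) (by omega) (by omega)
    have hji := minor_mem_span_minors x d (a := i + 1) (b := j) hij (by omega)
    convert add_mem (add_mem hi hj) (sub_mem hij' hji) using 1
    ring

theorem minor_mem_span_quadrics :
    ∀ g a, a + g < d → x a * x (a + g + 1) - x (a + 1) * x (a + g) ∈ Ideal.span (quadrics x d)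
  | 0, a, _ => by simp [mul_comm]
  | 1, a, h => Ideal.subset_span (Or.inl ⟨a, by omega, by ring⟩)
  | g + 2, a, h => by
    have hG : (x a + x (a + g + 1)) * (x (a + 2) + x (a + g + 1 + 2)) -
        (x (a + 1) + x (a + g + 1 + 1)) ^ 2 ∈ Ideal.span (quadrics x d) :=
      Ideal.subset_span (Or.inr ⟨a, a + g + 1, by omega, by omega, rfl⟩)
    have hFa : x a * x (a + 2) - x (a + 1) ^ 2 ∈ Ideal.span (quadrics x d) :=
      Ideal.subset_span (Or.inl ⟨a, by omega, rfl⟩)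
    have hFb : x (a + g + 1) * x (a + g + 1 + 2) - x (a + g + 1 + 1) ^ 2 ∈
        Ideal.span (quadrics x d) :=
      Ideal.subset_span (Or.inl ⟨a + g + 1, by omega, rfl⟩)
    convert add_mem (sub_mem (sub_mem hG hFa) hFb)
      (minor_mem_span_quadrics g (a + 1) (by omega)) using 1
    ring_nf

theorem span_quadrics_eq_span_minors : Ideal.span (quadrics x d) = Ideal.span (minors x d) := by
  refine le_antisymm (span_quadrics_le_span_minors x d) (Ideal.span_le.2 ?_)
  rintro _ ⟨a, b, hab, hb, rfl⟩
  obtain ⟨g, rfl⟩ := Nat.exists_eq_add_of_le hab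
  exact minor_mem_span_quadrics x d g a hb

end Minors

def IsBalanced (A : Multiset ℕ) : Prop :=
  ∀ a ∈ A, ∀ b ∈ A, b ≤ a + 1

namespace IsBalanced

variable {A B : Multiset ℕ}

theorem of_cons {a : ℕ} (h : IsBalanced (a ::ₘ A)) : IsBalanced A :=
  fun b hb c hc => h b (Multiset.mem_cons_of_mem hb) c (Multiset.mem_cons_of_mem hc)

theorem sum_lt (h : IsBalanced A) {a : ℕ} (ha : a ∈ A) : A.sum < Multiset.card A * (a + 1) := by
  obtain ⟨A', rfl⟩ := Multiset.exists_cons_of_mem ha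
  have : A'.sum ≤ Multiset.card A' * (a + 1) := by
    simpa using Multiset.sum_le_card_nsmul A' (a + 1)
      fun b hb => h a (Multiset.mem_cons_self a A') b (Multiset.mem_cons_of_mem hb)
  simp only [Multiset.sum_cons, Multiset.card_cons]
  nlinarith

theorem sum_lt_sum (hA : IsBalanced A) (hcard : Multiset.card A = Multiset.card B) {a b : ℕ}
    (ha : a ∈ A) (hB : ∀ y ∈ B, b ≤ y) (hab : a < b) : A.sum < B.sum := calc
  A.sum < Multiset.card A * (a + 1) := hA.sum_lt ha
  _ ≤ Multiset.card B * b := by rw [hcard]; gcongr; exact hab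
  _ ≤ B.sum := by simpa using Multiset.card_nsmul_le_sum hB

theorem eq_of_card_eq_of_sum_eq (hA : IsBalanced A) (hB : IsBalanced B)
    (hcard : Multiset.card A = Multiset.card B) (hsum : A.sum = B.sum) : A = B := by
  induction hn : Multiset.card A generalizing A B with
  | zero =>
    rw [Multiset.card_eq_zero.1 hn, Multiset.card_eq_zero.1 (hcard.symm.trans hn)]
  | succ n ih =>
    have hmin : ∀ C : Multiset ℕ, Multiset.card C = n + 1 → ∃ c ∈ C, ∀ y ∈ C, c ≤ y := by
      intro C hC
      obtain ⟨c, hc, hmin⟩ := C.toFinset.exists_min_image id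
        (Multiset.toFinset_nonempty.2 (Multiset.card_pos.1 (by omega)))
      exact ⟨c, Multiset.mem_toFinset.1 hc, fun y hy => hmin y (Multiset.mem_toFinset.2 hy)⟩
    obtain ⟨a, ha, haA⟩ := hmin A hn
    obtain ⟨b, hb, hbB⟩ := hmin B (hcard ▸ hn)
    obtain rfl : a = b := by
      by_contra hab
      rcases Nat.lt_or_gt_of_ne hab with h | h
      · exact (hA.sum_lt_sum hcard ha hbB h).ne hsum
      · exact (hB.sum_lt_sum hcard.symm hb haA h).ne hsum.symm
    obtain ⟨A', rfl⟩ := Multiset.exists_cons_of_mem ha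
    obtain ⟨B', rfl⟩ := Multiset.exists_cons_of_mem hb
    simp only [Multiset.card_cons, Multiset.sum_cons, add_left_inj, add_right_inj] at hcard hsum hn
    rw [ih hA.of_cons hB.of_cons hcard hsum hn]

theorem exists_eq_cons_cons_of_not (h : ¬IsBalanced A) :
    ∃ a b A', a < b ∧ A = a ::ₘ (b + 1) ::ₘ A' := by
  simp only [IsBalanced, not_forall, not_le] at h
  obtain ⟨a, ha, c, hc, hac⟩ := h
  obtain ⟨A₁, rfl⟩ := Multiset.exists_cons_of_mem ha
  obtain ⟨A', rfl⟩ := Multiset.exists_cons_of_mem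
    ((Multiset.mem_cons.1 hc).resolve_left (by omega))
  obtain ⟨b, rfl⟩ : ∃ b, c = b + 1 := ⟨c - 1, by omega⟩
  exact ⟨a, b, A', by omega, rfl⟩

end IsBalanced

section Binomials

variable {R : Type*} [CommRing R] (x : ℕ → R) (d : ℕ)

theorem exists_isBalanced_prod_sub_mem (A : Multiset ℕ) (hA : ∀ a ∈ A, a ≤ d) :
    ∃ B, IsBalanced B ∧ Multiset.card B = Multiset.card A ∧ B.sum = A.sum ∧
      (A.map x).prod - (B.map x).prod ∈ Ideal.span (minors x d) := by
  induction hV : (A.map (· ^ 2)).sum using Nat.strong_induction_on generalizing A with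
  | _ V ih =>
  by_cases hbal : IsBalanced A
  · exact ⟨A, hbal, rfl, rfl, by simp⟩
  obtain ⟨a, b, A', hab, rfl⟩ := IsBalanced.exists_eq_cons_cons_of_not hbal
  have hbd : b < d := by have := hA (b + 1) (by simp); omega
  have hlt : (((a + 1) ::ₘ b ::ₘ A').map (· ^ 2)).sum < V := by
    rw [← hV]
    simp only [Multiset.map_cons, Multiset.sum_cons]
    nlinarith
  have hA₁ : ∀ c ∈ (a + 1) ::ₘ b ::ₘ A', c ≤ d := by
    simp only [Multiset.mem_cons, forall_eq_or_imp] at hA ⊢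
    exact ⟨by omega, by omega, hA.2.2⟩
  obtain ⟨B, hB, hcard, hsum, hmem⟩ := ih _ hlt _ hA₁ rfl
  refine ⟨B, hB, by simpa using hcard, by simp only [hsum, Multiset.sum_cons]; omega, ?_⟩
  have hstep : ((a ::ₘ (b + 1) ::ₘ A').map x).prod - (((a + 1) ::ₘ b ::ₘ A').map x).prod =
      (x a * x (b + 1) - x (a + 1) * x b) * (A'.map x).prod := by
    simp only [Multiset.map_cons, Multiset.prod_cons]; ring
  rw [← sub_add_sub_cancel _ (((a + 1) ::ₘ b ::ₘ A').map x).prod, hstep]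
  exact add_mem (Ideal.mul_mem_right _ _ (minor_mem_span_minors x d hab.le hbd)) hmem

theorem prod_sub_prod_mem_span_minors {A B : Multiset ℕ} (hA : ∀ a ∈ A, a ≤ d)
    (hB : ∀ b ∈ B, b ≤ d) (hcard : Multiset.card A = Multiset.card B) (hsum : A.sum = B.sum) :
    (A.map x).prod - (B.map x).prod ∈ Ideal.span (minors x d) := by
  obtain ⟨A', hA', hcardA, hsumA, hmemA⟩ := exists_isBalanced_prod_sub_mem x d A hA
  obtain ⟨B', hB', hcardB, hsumB, hmemB⟩ := exists_isBalanced_prod_sub_mem x d B hB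
  obtain rfl := hA'.eq_of_card_eq_of_sum_eq hB' (by omega) (by omega)
  simpa using sub_mem hmemA hmemB

end Binomials

section Curve

variable {k : Type*} [CommRing k] (d : ℕ)

/-- The coordinate `z_i` of `P^d`, indexed by `i : ℕ` (clamped to `d` beyond `d`). -/
noncomputable def coord (i : ℕ) : MvPolynomial (Fin (d + 1)) k := X (Fin.clamp i d)

theorem coord_of_le {i : ℕ} (h : i ≤ d) :
    (coord d i : MvPolynomial (Fin (d + 1)) k) = X ⟨i, by omega⟩ := by
  simp [coord, Fin.clamp, h]

theorem coord_val (m : Fin (d + 1)) : (coord d m : MvPolynomial (Fin (d + 1)) k) = X m :=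
  coord_of_le d (Nat.le_of_lt_succ m.2)

/-- The exponent vector of `s ^ (d - m) * t ^ m` in `k[s, t]`. -/
noncomputable def curveExponent (m : Fin (d + 1)) : Fin 2 →₀ ℕ :=
  Finsupp.single 0 (d - m) + Finsupp.single 1 (m : ℕ)

theorem weight_curveExponent_apply_one (μ : Fin (d + 1) →₀ ℕ) :
    Finsupp.weight (curveExponent d) μ 1 = (μ.toMultiset.map Fin.val).sum := by
  rw [Finsupp.weight_apply_apply, Finsupp.weight_eq_sum_map_toMultiset]
  simp [curveExponent]

theorem weight_curveExponent_apply_zero_add_one (μ : Fin (d + 1) →₀ ℕ) :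
    Finsupp.weight (curveExponent d) μ 0 + Finsupp.weight (curveExponent d) μ 1 =
      d * Multiset.card μ.toMultiset := by
  rw [Finsupp.weight_apply_apply, Finsupp.weight_apply_apply,
    Finsupp.weight_eq_sum_map_toMultiset, Finsupp.weight_eq_sum_map_toMultiset,
    ← Multiset.sum_map_add]
  have : ∀ m : Fin (d + 1), curveExponent d m 0 + curveExponent d m 1 = d := fun m => by
    simp [curveExponent]; omega
  simp only [this, Multiset.map_const', Multiset.sum_replicate, smul_eq_mul, mul_comm]

theorem prod_map_coord_toMultiset (μ : Fin (d + 1) →₀ ℕ) :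
    ((μ.toMultiset.map Fin.val).map (coord d)).prod =
      (monomial μ 1 : MvPolynomial (Fin (d + 1)) k) := by
  rw [Multiset.map_map, Function.comp_def]
  simp only [coord_val]
  rw [Finsupp.toMultiset_map, Finsupp.prod_toMultiset,
    Finsupp.prod_mapDomain_index (by simp) (by simp [pow_add]), ← prod_X_pow_eq_monomial,
    Finsupp.prod]

theorem eval_curve_minor {s t : k} {a b : ℕ} (hab : a ≤ b) (hb : b < d) :
    eval (fun m : Fin (d + 1) => s ^ (d - m.1) * t ^ m.1)
      (coord d a * coord d (b + 1) - coord d (a + 1) * coord d b) = 0 := by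
  rw [coord_of_le d (by omega : a ≤ d), coord_of_le d (by omega : b + 1 ≤ d),
    coord_of_le d (by omega : a + 1 ≤ d), coord_of_le d hb.le]
  simp only [map_sub, map_mul, eval_X]
  rw [show d - a = d - (a + 1) + 1 by omega, show d - b = d - (b + 1) + 1 by omega]
  ring

theorem span_minors_le_ker_eval (s t : k) :
    Ideal.span (minors (coord d) d) ≤
      RingHom.ker (eval fun m : Fin (d + 1) => s ^ (d - m.1) * t ^ m.1) := by
  refine Ideal.span_le.2 ?_
  rintro _ ⟨a, b, hab, hb, rfl⟩
  exact eval_curve_minor d hab hb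

theorem monomial_sub_monomial_mem_span_minors (hd : 0 < d) {μ ν : Fin (d + 1) →₀ ℕ}
    (h : Finsupp.weight (curveExponent d) μ = Finsupp.weight (curveExponent d) ν) :
    (monomial μ 1 - monomial ν 1 : MvPolynomial (Fin (d + 1)) k) ∈
      Ideal.span (minors (coord d) d) := by
  have hsum := weight_curveExponent_apply_one d μ
  have hcard := weight_curveExponent_apply_zero_add_one d μ
  rw [h, weight_curveExponent_apply_one] at hsum
  rw [h, weight_curveExponent_apply_zero_add_one] at hcard
  rw [← prod_map_coord_toMultiset, ← prod_map_coord_toMultiset]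
  refine prod_sub_prod_mem_span_minors _ d ?_ ?_ ?_ hsum.symm
  · simpa using fun m _ => Nat.le_of_lt_succ m.2
  · simpa using fun m _ => Nat.le_of_lt_succ m.2
  · simpa using (Nat.eq_of_mul_eq_mul_left hd hcard).symm

theorem aeval_curveExponent_eq_zero [IsDomain k] [Infinite k] {p : MvPolynomial (Fin (d + 1)) k}
    (hp : ∀ s t : k, eval (fun m : Fin (d + 1) => s ^ (d - m.1) * t ^ m.1) p = 0) :
    aeval (fun m => monomial (curveExponent d m) (1 : k)) p = 0 := by
  refine MvPolynomial.funext fun v => ?_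
  rw [aeval_eq_bind₁, map_zero, eval, eval₂Hom_bind₁]
  simpa [curveExponent, monomial_eq, Finsupp.prod_add_index, pow_add] using hp (v 0) (v 1)

theorem mem_span_minors_iff [IsDomain k] [Infinite k] (hd : 0 < d)
    (p : MvPolynomial (Fin (d + 1)) k) :
    p ∈ Ideal.span (minors (coord d) d) ↔
      ∀ s t : k, eval (fun m : Fin (d + 1) => s ^ (d - m.1) * t ^ m.1) p = 0 :=
  ⟨fun hp s t => span_minors_le_ker_eval d s t hp, fun hp =>
    mem_of_mapDomain_eq_zero _ (fun _ _ => monomial_sub_monomial_mem_span_minors d hd)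
      ((aeval_monomial_one_eq_mapDomain_weight _ p).symm.trans
        (aeval_curveExponent_eq_zero d hp))⟩

end Curve

theorem exists_isSymm_rank_le_three_of_mem_quadrics {k : Type*} [Field k] (d : ℕ) (h2 : (2 : k) ≠ 0)
    {f : MvPolynomial (Fin (d + 1)) k} (hf : f ∈ quadrics (coord d) d) :
    ∃ M : Matrix (Fin (d + 1)) (Fin (d + 1)) k,
      M.IsSymm ∧ M.rank ≤ 3 ∧ f = ∑ i, ∑ j, M i j • (X i * X j) := by
  have hcoord : ∀ i, (coord d i : MvPolynomial (Fin (d + 1)) k) =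
      Fintype.linearCombination k X (Pi.single (Fin.clamp i d) 1) := fun i => by
    rw [Fintype.linearCombination_apply_single, one_smul, coord]
  rcases hf with ⟨i, -, rfl⟩ | ⟨i, j, -, -, rfl⟩
  · simp only [hcoord]
    exact exists_isSymm_rank_le_three h2 _ _ _
  · simp only [hcoord, ← map_add]
    exact exists_isSymm_rank_le_three h2 _ _ _

end RationalNormalCurve

open RationalNormalCurve

/-- The homogeneous ideal of the rational normal curve `C_d ⊂ P^d` (`d ≥ 2`) is generated by
quadrics of rank at most 3: the ideal generated by the quadrics
`F_i = z_i z_{i+2} − z_{i+1}²` (`0 ≤ i ≤ d−2`) and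
`G_{i,j} = (z_i+z_j)(z_{i+2}+z_{j+2}) − (z_{i+1}+z_{j+1})²` (`0 ≤ i < j ≤ d−2`)
equals the full vanishing ideal of (the affine cone over) `C_d`, and every generator is a
quadric of rank `≤ 3`, i.e. is given by a symmetric matrix of rank `≤ 3`. -/
theorem stmt_9 {k : Type*} [Field k] [IsAlgClosed k] (hchar : ringChar k ≠ 2)
    (d : ℕ) (hd : 2 ≤ d)
    (S : Set (MvPolynomial (Fin (d + 1)) k))
    (hS : S = {f | ∃ i : ℕ, ∃ hi : i ≤ d - 2,
        f = X (⟨i, by omega⟩ : Fin (d + 1)) * X ⟨i + 2, by omega⟩ - X ⟨i + 1, by omega⟩ ^ 2} ∪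
      {f | ∃ i j : ℕ, ∃ hij : i < j, ∃ hj : j ≤ d - 2,
        f = (X (⟨i, by omega⟩ : Fin (d + 1)) + X ⟨j, by omega⟩) *
            (X ⟨i + 2, by omega⟩ + X ⟨j + 2, by omega⟩) -
          (X ⟨i + 1, by omega⟩ + X ⟨j + 1, by omega⟩) ^ 2}) :
    (∀ p : MvPolynomial (Fin (d + 1)) k,
      p ∈ Ideal.span S ↔
        ∀ s t : k, eval (fun m : Fin (d + 1) => s ^ (d - m.1) * t ^ m.1) p = 0) ∧
    (∀ f ∈ S, ∃ M : Matrix (Fin (d + 1)) (Fin (d + 1)) k,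
      M.IsSymm ∧ M.rank ≤ 3 ∧ f = ∑ i, ∑ j, M i j • (X i * X j)) := by
  have hX : ∀ i (hi : i < d + 1), (X ⟨i, hi⟩ : MvPolynomial (Fin (d + 1)) k) = coord d i :=
    fun i hi => (coord_of_le d (by omega)).symm
  obtain rfl : S = quadrics (coord d) d := by
    rw [hS]
    simp only [hX, exists_prop, Nat.le_sub_iff_add_le hd]
    rfl
  refine ⟨fun p => ?_, fun f hf =>
    exists_isSymm_rank_le_three_of_mem_quadrics d (Ring.two_ne_zero hchar) hf⟩
  rw [span_quadrics_eq_span_minors, mem_span_minors_iff d (by omega)]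
end

section
/- If char k ≠ 2, the homogeneous ideal of the second Veronese surface V_{2,2} ⊂ P^5 (generated by the six 2×2 minors of the 3×3 symmetric matrix [[z_{200},z_{110},z_{101}],[z_{110},z_{020},z_{011}],[z_{101},z_{011},z_{002}]]) is generated by the six rank-3 quadrics F_{01}, F_{02}, F_{12}, G_{012}=Q(x_0,x_1+x_2,1), G_{102}=Q(x_1,x_0+x_2,1), G_{201}=Q(x_2,x_0+x_1,1). -/
open MvPolynomial

/-- Variables `X 0, …, X 5` stand for the coordinates `z200, z110, z101, z020, z011, z002`
of `P⁵`.  If `char k ≠ 2`, the homogeneous ideal of the second Veronese surface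
`V_{2,2} ⊂ P⁵` — generated by the six 2×2 minors of the symmetric matrix
`[[z200,z110,z101],[z110,z020,z011],[z101,z011,z002]]` — is generated by the six rank-3
quadrics `F01, F02, F12, G012 = Q(x₀,x₁+x₂,1), G102 = Q(x₁,x₀+x₂,1), G201 = Q(x₂,x₀+x₁,1)`. -/
theorem stmt_12 {k : Type*} [Field k] (hchar : ringChar k ≠ 2) :
    Ideal.span ({
        X 0 * X 3 - X 1 ^ 2,            -- F01 = z200 z020 − z110²
        X 0 * X 5 - X 2 ^ 2,            -- F02 = z200 z002 − z101²
        X 3 * X 5 - X 4 ^ 2,            -- F12 = z020 z002 − z011²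
        X 0 * (X 3 + 2 * X 4 + X 5) - (X 1 + X 2) ^ 2,   -- G012
        X 3 * (X 0 + 2 * X 2 + X 5) - (X 1 + X 4) ^ 2,   -- G102
        X 5 * (X 0 + 2 * X 1 + X 3) - (X 2 + X 4) ^ 2}   -- G201
      : Set (MvPolynomial (Fin 6) k)) =
    Ideal.span ({
        X 0 * X 3 - X 1 ^ 2,
        X 0 * X 5 - X 2 ^ 2,
        X 3 * X 5 - X 4 ^ 2,
        X 0 * X 4 - X 1 * X 2,          -- z200 z011 − z110 z101
        X 3 * X 2 - X 1 * X 4,          -- z020 z101 − z110 z011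
        X 5 * X 1 - X 2 * X 4}          -- z002 z110 − z101 z011
      : Set (MvPolynomial (Fin 6) k)) := by
  have h2 : (2 : k) ≠ 0 := Ring.two_ne_zero hchar
  have hinv : (C (2:k)⁻¹ * 2 : MvPolynomial (Fin 6) k) = 1 := by
    rw [show ((2:MvPolynomial (Fin 6) k)) = C 2 from (map_ofNat C 2).symm, ← C_mul,
      inv_mul_cancel₀ h2, C_1]
  apply le_antisymm <;> rw [Ideal.span_le] <;>
    simp only [Set.insert_subset_iff, Set.singleton_subset_iff, SetLike.mem_coe]
  · refine ⟨Ideal.subset_span (by simp), Ideal.subset_span (by simp),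
      Ideal.subset_span (by simp), ?_, ?_, ?_⟩
    · have := Ideal.add_mem _ (Ideal.add_mem _
        (Ideal.subset_span (s := ({X 0 * X 3 - X 1 ^ 2, X 0 * X 5 - X 2 ^ 2, X 3 * X 5 - X 4 ^ 2,
          X 0 * X 4 - X 1 * X 2, X 3 * X 2 - X 1 * X 4, X 5 * X 1 - X 2 * X 4} :
          Set (MvPolynomial (Fin 6) k))) (show X 0 * X 3 - X 1 ^ 2 ∈ _ by simp))
        (Ideal.subset_span (show X 0 * X 5 - X 2 ^ 2 ∈ _ by simp)))
        (Ideal.mul_mem_left _ 2 (Ideal.subset_span (show X 0 * X 4 - X 1 * X 2 ∈ _ by simp)))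
      convert this using 1
      ring
    · have := Ideal.add_mem _ (Ideal.add_mem _
        (Ideal.subset_span (s := ({X 0 * X 3 - X 1 ^ 2, X 0 * X 5 - X 2 ^ 2, X 3 * X 5 - X 4 ^ 2,
          X 0 * X 4 - X 1 * X 2, X 3 * X 2 - X 1 * X 4, X 5 * X 1 - X 2 * X 4} :
          Set (MvPolynomial (Fin 6) k))) (show X 0 * X 3 - X 1 ^ 2 ∈ _ by simp))
        (Ideal.subset_span (show X 3 * X 5 - X 4 ^ 2 ∈ _ by simp)))
        (Ideal.mul_mem_left _ 2 (Ideal.subset_span (show X 3 * X 2 - X 1 * X 4 ∈ _ by simp)))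
      convert this using 1
      ring
    · have := Ideal.add_mem _ (Ideal.add_mem _
        (Ideal.subset_span (s := ({X 0 * X 3 - X 1 ^ 2, X 0 * X 5 - X 2 ^ 2, X 3 * X 5 - X 4 ^ 2,
          X 0 * X 4 - X 1 * X 2, X 3 * X 2 - X 1 * X 4, X 5 * X 1 - X 2 * X 4} :
          Set (MvPolynomial (Fin 6) k))) (show X 0 * X 5 - X 2 ^ 2 ∈ _ by simp))
        (Ideal.subset_span (show X 3 * X 5 - X 4 ^ 2 ∈ _ by simp)))
        (Ideal.mul_mem_left _ 2 (Ideal.subset_span (show X 5 * X 1 - X 2 * X 4 ∈ _ by simp)))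
      convert this using 1
      ring
  · refine ⟨Ideal.subset_span (by simp), Ideal.subset_span (by simp),
      Ideal.subset_span (by simp), ?_, ?_, ?_⟩
    · have := Ideal.mul_mem_left _ (C (2:k)⁻¹) (Ideal.sub_mem _ (Ideal.sub_mem _
        (Ideal.subset_span (s := ({X 0 * X 3 - X 1 ^ 2, X 0 * X 5 - X 2 ^ 2, X 3 * X 5 - X 4 ^ 2,
          X 0 * (X 3 + 2 * X 4 + X 5) - (X 1 + X 2) ^ 2,
          X 3 * (X 0 + 2 * X 2 + X 5) - (X 1 + X 4) ^ 2,
          X 5 * (X 0 + 2 * X 1 + X 3) - (X 2 + X 4) ^ 2} : Set (MvPolynomial (Fin 6) k)))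
          (show X 0 * (X 3 + 2 * X 4 + X 5) - (X 1 + X 2) ^ 2 ∈ _ by simp))
        (Ideal.subset_span (show X 0 * X 3 - X 1 ^ 2 ∈ _ by simp)))
        (Ideal.subset_span (show X 0 * X 5 - X 2 ^ 2 ∈ _ by simp)))
      convert this using 1
      linear_combination (-(X 0 * X 4) + X 1 * X 2) * hinv
    · have := Ideal.mul_mem_left _ (C (2:k)⁻¹) (Ideal.sub_mem _ (Ideal.sub_mem _
        (Ideal.subset_span (s := ({X 0 * X 3 - X 1 ^ 2, X 0 * X 5 - X 2 ^ 2, X 3 * X 5 - X 4 ^ 2,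
          X 0 * (X 3 + 2 * X 4 + X 5) - (X 1 + X 2) ^ 2,
          X 3 * (X 0 + 2 * X 2 + X 5) - (X 1 + X 4) ^ 2,
          X 5 * (X 0 + 2 * X 1 + X 3) - (X 2 + X 4) ^ 2} : Set (MvPolynomial (Fin 6) k)))
          (show X 3 * (X 0 + 2 * X 2 + X 5) - (X 1 + X 4) ^ 2 ∈ _ by simp))
        (Ideal.subset_span (show X 0 * X 3 - X 1 ^ 2 ∈ _ by simp)))
        (Ideal.subset_span (show X 3 * X 5 - X 4 ^ 2 ∈ _ by simp)))
      convert this using 1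
      linear_combination (-(X 3 * X 2) + X 1 * X 4) * hinv
    · have := Ideal.mul_mem_left _ (C (2:k)⁻¹) (Ideal.sub_mem _ (Ideal.sub_mem _
        (Ideal.subset_span (s := ({X 0 * X 3 - X 1 ^ 2, X 0 * X 5 - X 2 ^ 2, X 3 * X 5 - X 4 ^ 2,
          X 0 * (X 3 + 2 * X 4 + X 5) - (X 1 + X 2) ^ 2,
          X 3 * (X 0 + 2 * X 2 + X 5) - (X 1 + X 4) ^ 2,
          X 5 * (X 0 + 2 * X 1 + X 3) - (X 2 + X 4) ^ 2} : Set (MvPolynomial (Fin 6) k)))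
          (show X 5 * (X 0 + 2 * X 1 + X 3) - (X 2 + X 4) ^ 2 ∈ _ by simp))
        (Ideal.subset_span (show X 0 * X 5 - X 2 ^ 2 ∈ _ by simp)))
        (Ideal.subset_span (show X 3 * X 5 - X 4 ^ 2 ∈ _ by simp)))
      convert this using 1
      linear_combination (-(X 5 * X 1) + X 2 * X 4) * hinv
end

section
/- Over a field k of characteristic 3, the k-span W of all quadrics of the form f(ℓ₁²)f(ℓ₂²) − f(ℓ₁ℓ₂)² (ℓ₁, ℓ₂ linear forms in x_0,…,x_3, f the linear identification of degree-2 monomials with the coordinates z_I of P^9) is a proper subspace of the 20-dimensional space I(V_{3,2})_2 of quadratic forms vanishing on the second Veronese embedding of P³; in particular dim_k W ≤ 19. -/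
open MvPolynomial

/-- Index type for the coordinates `z_I` of `P^N`: degree-2 exponent vectors
in the `n+1` variables `x₀,…,x_n`. -/
def VIdx (n : ℕ) : Type := {v : Fin (n + 1) → ℕ // ∑ i, v i = 2}

/-- The `i`-th standard basis exponent vector. -/
def ee (n : ℕ) (i : Fin (n + 1)) : Fin (n + 1) → ℕ := fun j => if j = i then 1 else 0

/-- The degree-2 exponent vector `e_i + e_j` corresponding to the monomial `x_i x_j`. -/
def pairIdx (n : ℕ) (i j : Fin (n + 1)) : VIdx n :=
  ⟨ee n i + ee n j, by simp [ee, Finset.sum_add_distrib]⟩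

/-- `f(ℓ_a · ℓ_b)` where `ℓ_a, ℓ_b` are the linear forms in `x₀,…,x_n` with coefficient
vectors `a, b`, and `f` is the linear identification of degree-2 monomials `x_i x_j`
with the coordinates `z_{e_i+e_j}`. -/
noncomputable def fprod (k : Type*) [CommRing k] (n : ℕ) (a b : Fin (n + 1) → k) :
    MvPolynomial (VIdx n) k :=
  ∑ i, ∑ j, C (a i * b j) * X (pairIdx n i j)

/-- The rank-3 quadric `Q(ℓ₁,ℓ₂) = f(ℓ₁²)·f(ℓ₂²) − f(ℓ₁ℓ₂)²`. -/
noncomputable def Qquad (k : Type*) [CommRing k] (n : ℕ) (a b : Fin (n + 1) → k) :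
    MvPolynomial (VIdx n) k :=
  fprod k n a a * fprod k n b b - fprod k n a b ^ 2

/-- The comultiplication of the second Veronese embedding: `z_I ↦ x^I`. -/
noncomputable def ver (k : Type*) [CommRing k] (n : ℕ) (v : VIdx n) :
    MvPolynomial (Fin (n + 1)) k :=
  ∏ i, X i ^ v.1 i

/-! ### Auxiliary material -/

instance (n : ℕ) : DecidableEq (VIdx n) := fun a b =>
  decidable_of_iff _ Subtype.ext_iff.symm

theorem pairIdx_comm (n : ℕ) (i j : Fin (n + 1)) : pairIdx n i j = pairIdx n j i :=
  Subtype.ext (add_comm _ _)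

/-- A two-by-two minor of the generic symmetric matrix:
`z_{ii} z_{jl} - z_{ij} z_{il}`. -/
noncomputable def NN (k : Type*) [CommRing k] (i j l : Fin 4) : MvPolynomial (VIdx 3) k :=
  X (pairIdx 3 i i) * X (pairIdx 3 j l) - X (pairIdx 3 i j) * X (pairIdx 3 i l)

/-- The sum of the three "generic" quadratic monomials. -/
noncomputable def GG (k : Type*) [CommRing k] : MvPolynomial (VIdx 3) k :=
  X (pairIdx 3 0 1) * X (pairIdx 3 2 3) + X (pairIdx 3 0 2) * X (pairIdx 3 1 3) +
    X (pairIdx 3 0 3) * X (pairIdx 3 1 2)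

def cN {k : Type*} [CommRing k] (a b : Fin 4 → k) (i j l : Fin 4) : k :=
  2 * a i ^ 2 * b j * b l + 2 * a j * a l * b i ^ 2 - 2 * a i * b i * (a j * b l + a l * b j)

def cD {k : Type*} [CommRing k] (a b : Fin 4 → k) (i j : Fin 4) : k :=
  (a i * b j - a j * b i) ^ 2

def cG {k : Type*} [CommRing k] (a b : Fin 4 → k) : k :=
  -2 * (a 0 * a 1 * b 2 * b 3 + a 0 * a 2 * b 1 * b 3 + a 0 * a 3 * b 1 * b 2 +
    a 1 * a 2 * b 0 * b 3 + a 1 * a 3 * b 0 * b 2 + a 2 * a 3 * b 0 * b 1)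

/-- The 19 spanning quadrics. -/
noncomputable def gen (k : Type*) [CommRing k] : Fin 19 → MvPolynomial (VIdx 3) k
  | ⟨0, _⟩ => NN k 0 1 2
  | ⟨1, _⟩ => NN k 0 1 3
  | ⟨2, _⟩ => NN k 0 2 3
  | ⟨3, _⟩ => NN k 1 0 2
  | ⟨4, _⟩ => NN k 1 0 3
  | ⟨5, _⟩ => NN k 1 2 3
  | ⟨6, _⟩ => NN k 2 0 1
  | ⟨7, _⟩ => NN k 2 0 3
  | ⟨8, _⟩ => NN k 2 1 3
  | ⟨9, _⟩ => NN k 3 0 1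
  | ⟨10, _⟩ => NN k 3 0 2
  | ⟨11, _⟩ => NN k 3 1 2
  | ⟨12, _⟩ => NN k 0 1 1
  | ⟨13, _⟩ => NN k 0 2 2
  | ⟨14, _⟩ => NN k 0 3 3
  | ⟨15, _⟩ => NN k 1 2 2
  | ⟨16, _⟩ => NN k 1 3 3
  | ⟨17, _⟩ => NN k 2 3 3
  | ⟨18, _⟩ => GG k
  | ⟨n + 19, h⟩ => absurd h (by omega)

set_option maxHeartbeats 2000000 in
/-- The key character-3 identity: every `Qquad` is an explicit linear combination of
the 19 spanning quadrics. -/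
theorem key {k : Type*} [Field k] [CharP k 3] (a b : Fin 4 → k) :
    Qquad k 3 a b =
      cN a b 0 1 2 • NN k 0 1 2 + cN a b 0 1 3 • NN k 0 1 3 + cN a b 0 2 3 • NN k 0 2 3 +
      cN a b 1 0 2 • NN k 1 0 2 + cN a b 1 0 3 • NN k 1 0 3 + cN a b 1 2 3 • NN k 1 2 3 +
      cN a b 2 0 1 • NN k 2 0 1 + cN a b 2 0 3 • NN k 2 0 3 + cN a b 2 1 3 • NN k 2 1 3 +
      cN a b 3 0 1 • NN k 3 0 1 + cN a b 3 0 2 • NN k 3 0 2 + cN a b 3 1 2 • NN k 3 1 2 +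
      cD a b 0 1 • NN k 0 1 1 + cD a b 0 2 • NN k 0 2 2 + cD a b 0 3 • NN k 0 3 3 +
      cD a b 1 2 • NN k 1 2 2 + cD a b 1 3 • NN k 1 3 3 + cD a b 2 3 • NN k 2 3 3 +
      cG a b • GG k := by
  have h3 : (3 : MvPolynomial (VIdx 3) k) = 0 := CharP.cast_eq_zero _ 3
  have e10 : pairIdx 3 1 0 = pairIdx 3 0 1 := pairIdx_comm 3 1 0
  have e20 : pairIdx 3 2 0 = pairIdx 3 0 2 := pairIdx_comm 3 2 0
  have e21 : pairIdx 3 2 1 = pairIdx 3 1 2 := pairIdx_comm 3 2 1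
  have e30 : pairIdx 3 3 0 = pairIdx 3 0 3 := pairIdx_comm 3 3 0
  have e31 : pairIdx 3 3 1 = pairIdx 3 1 3 := pairIdx_comm 3 3 1
  have e32 : pairIdx 3 3 2 = pairIdx 3 2 3 := pairIdx_comm 3 3 2
  have hsum : ∀ f : Fin (3 + 1) → MvPolynomial (VIdx 3) k,
      ∑ i, f i = f 0 + f 1 + f 2 + f 3 := fun f => Fin.sum_univ_four f
  simp only [Qquad, fprod, NN, GG, cN, cD, cG, hsum, smul_eq_C_mul,
    map_add, map_mul, map_sub, map_neg, map_pow, map_ofNat, e10, e20, e21, e30, e31, e32]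
  linear_combination (2 * ((C (a 0) * C (a 1) * C (b 2) * C (b 3) +
        C (a 2) * C (a 3) * C (b 0) * C (b 1)) *
      (X (pairIdx 3 0 1) * X (pairIdx 3 2 3)) +
    (C (a 0) * C (a 2) * C (b 1) * C (b 3) + C (a 1) * C (a 3) * C (b 0) * C (b 2)) *
      (X (pairIdx 3 0 2) * X (pairIdx 3 1 3)) +
    (C (a 0) * C (a 3) * C (b 1) * C (b 2) + C (a 1) * C (a 2) * C (b 0) * C (b 3)) *
      (X (pairIdx 3 0 3) * X (pairIdx 3 1 2))) : MvPolynomial (VIdx 3) k) * h3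

theorem ver_pair {k : Type*} [CommRing k] (i j : Fin 4) :
    ver k 3 (pairIdx 3 i j) = X i * X j := by
  show (∏ t, (X t : MvPolynomial (Fin 4) k) ^ (pairIdx 3 i j).1 t) = X i * X j
  simp only [pairIdx, ee, Pi.add_apply, pow_add, Finset.prod_mul_distrib, pow_ite, pow_one,
    pow_zero, Finset.prod_ite_eq', Finset.mem_univ, if_true]

theorem aeval_fprod {k : Type*} [CommRing k] (a b : Fin 4 → k) :
    aeval (ver k 3) (fprod k 3 a b) =
      (∑ i, C (a i) * X i) * (∑ j : Fin 4, C (b j) * X j) := by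
  rw [Finset.sum_mul_sum]
  simp only [fprod, map_sum, map_mul, aeval_X, aeval_C, ver_pair, algebraMap_eq]
  refine Finset.sum_congr rfl fun i _ => Finset.sum_congr rfl fun j _ => by ring

theorem aeval_Qquad {k : Type*} [CommRing k] (a b : Fin 4 → k) :
    aeval (ver k 3) (Qquad k 3 a b) = 0 := by
  rw [Qquad, map_sub, map_mul, map_pow, aeval_fprod, aeval_fprod, aeval_fprod]
  ring

theorem homog_fprod {k : Type*} [CommRing k] (a b : Fin 4 → k) :
    (fprod k 3 a b).IsHomogeneous 1 := by
  refine IsHomogeneous.sum _ _ _ fun i _ => IsHomogeneous.sum _ _ _ fun j _ => ?_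
  simpa using (isHomogeneous_C _ (a i * b j)).mul (isHomogeneous_X _ _)

theorem homog_Qquad {k : Type*} [CommRing k] (a b : Fin 4 → k) :
    (Qquad k 3 a b).IsHomogeneous 2 := by
  refine IsHomogeneous.sub ?_ ?_
  · simpa using (homog_fprod a a).mul (homog_fprod b b)
  · simpa using (homog_fprod a b).pow 2

theorem XX_eq {k : Type*} [CommRing k] (u v : VIdx 3) :
    (X u * X v : MvPolynomial (VIdx 3) k) =
      monomial (Finsupp.single u 1 + Finsupp.single v 1) 1 := by
  rw [X, X, monomial_mul, one_mul]

/-- Over a field of characteristic 3, the span `W` of all quadrics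
`f(ℓ₁²)f(ℓ₂²) − f(ℓ₁ℓ₂)²` (`ℓ₁,ℓ₂` linear forms in `x₀,…,x₃`) is a proper subspace of the
20-dimensional space `I(V_{3,2})₂` of quadratic forms vanishing on the second Veronese
embedding of `P³`; in particular `dim_k W ≤ 19`. -/
theorem stmt_14 {k : Type*} [Field k] [CharP k 3] :
    Module.finrank k
        ↥(Submodule.span k {q : MvPolynomial (VIdx 3) k | ∃ a b, q = Qquad k 3 a b}) ≤ 19 ∧
    (∀ w ∈ Submodule.span k {q : MvPolynomial (VIdx 3) k | ∃ a b, q = Qquad k 3 a b},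
      w.IsHomogeneous 2 ∧ aeval (ver k 3) w = 0) ∧
    (∃ q : MvPolynomial (VIdx 3) k, q.IsHomogeneous 2 ∧ aeval (ver k 3) q = 0 ∧
      q ∉ Submodule.span k {q : MvPolynomial (VIdx 3) k | ∃ a b, q = Qquad k 3 a b}) := by
  classical
  set W := Submodule.span k {q : MvPolynomial (VIdx 3) k | ∃ a b, q = Qquad k 3 a b} with hWdef
  -- W is contained in the span of the 19 generators
  have hWS : W ≤ Submodule.span k (Set.range (gen k)) := by
    rw [hWdef, Submodule.span_le]
    rintro q ⟨a, b, rfl⟩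
    rw [key a b]
    have hm : ∀ t : Fin 19, gen k t ∈ Submodule.span k (Set.range (gen k)) := fun t =>
      Submodule.subset_span ⟨t, rfl⟩
    refine Submodule.add_mem _ (Submodule.add_mem _ (Submodule.add_mem _ (Submodule.add_mem _
      (Submodule.add_mem _ (Submodule.add_mem _ (Submodule.add_mem _ (Submodule.add_mem _
      (Submodule.add_mem _ (Submodule.add_mem _ (Submodule.add_mem _ (Submodule.add_mem _
      (Submodule.add_mem _ (Submodule.add_mem _ (Submodule.add_mem _ (Submodule.add_mem _
      (Submodule.add_mem _ (Submodule.add_mem _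
        (Submodule.smul_mem _ _ (hm 0)) (Submodule.smul_mem _ _ (hm 1)))
        (Submodule.smul_mem _ _ (hm 2))) (Submodule.smul_mem _ _ (hm 3)))
        (Submodule.smul_mem _ _ (hm 4))) (Submodule.smul_mem _ _ (hm 5)))
        (Submodule.smul_mem _ _ (hm 6))) (Submodule.smul_mem _ _ (hm 7)))
        (Submodule.smul_mem _ _ (hm 8))) (Submodule.smul_mem _ _ (hm 9)))
        (Submodule.smul_mem _ _ (hm 10))) (Submodule.smul_mem _ _ (hm 11)))
        (Submodule.smul_mem _ _ (hm 12))) (Submodule.smul_mem _ _ (hm 13)))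
        (Submodule.smul_mem _ _ (hm 14))) (Submodule.smul_mem _ _ (hm 15)))
        (Submodule.smul_mem _ _ (hm 16))) (Submodule.smul_mem _ _ (hm 17)))
        (Submodule.smul_mem _ _ (hm 18))
  refine ⟨?_, ?_, ?_⟩
  · -- dimension bound
    haveI : Module.Finite k (Submodule.span k (Set.range (gen k))) :=
      FiniteDimensional.span_of_finite k (Set.finite_range _)
    refine le_trans (Submodule.finrank_mono hWS) ?_
    have hr : Set.range (gen k) = ↑(Finset.univ.image (gen k)) := by
      rw [Finset.coe_image, Finset.coe_univ, Set.image_univ]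
    rw [hr]
    refine le_trans (finrank_span_finset_le_card _) ?_
    exact le_trans (Finset.card_image_le) (by simp)
  · -- homogeneity and vanishing on the Veronese
    intro w hw
    refine Submodule.span_induction ?_ ?_ ?_ ?_ hw
    · rintro x ⟨a, b, rfl⟩
      exact ⟨homog_Qquad a b, aeval_Qquad a b⟩
    · exact ⟨isHomogeneous_zero _ _ _, map_zero _⟩
    · rintro x y _ _ ⟨hx1, hx2⟩ ⟨hy1, hy2⟩
      exact ⟨hx1.add hy1, by rw [map_add, hx2, hy2, add_zero]⟩
    · rintro c x _ ⟨hx1, hx2⟩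
      constructor
      · rw [smul_eq_C_mul]
        simpa using (isHomogeneous_C _ c).mul hx1
      · rw [smul_eq_C_mul, map_mul, hx2, mul_zero]
  · -- a quadric in the ideal that is not in W
    refine ⟨X (pairIdx 3 0 1) * X (pairIdx 3 2 3) - X (pairIdx 3 0 2) * X (pairIdx 3 1 3),
      ?_, ?_, ?_⟩
    · refine IsHomogeneous.sub ?_ ?_ <;>
        simpa using (isHomogeneous_X _ _).mul (isHomogeneous_X _ _)
    · rw [map_sub, map_mul, map_mul, aeval_X, aeval_X, aeval_X, aeval_X,
        ver_pair, ver_pair, ver_pair, ver_pair]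
      ring
    · intro hq
      -- the separating linear functional
      set m1 : VIdx 3 →₀ ℕ :=
        Finsupp.single (pairIdx 3 0 1) 1 + Finsupp.single (pairIdx 3 2 3) 1 with hm1
      set m2 : VIdx 3 →₀ ℕ :=
        Finsupp.single (pairIdx 3 0 2) 1 + Finsupp.single (pairIdx 3 1 3) 1 with hm2
      set φ : MvPolynomial (VIdx 3) k →ₗ[k] k := lcoeff k m1 - lcoeff k m2 with hφ
      have hker : ∀ t : Fin 19, φ (gen k t) = 0 := by
        intro t
        fin_cases t <;>
          simp (config := { decide := true }) [hφ, gen, NN, GG, XX_eq, hm1, hm2, lcoeff_apply,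
            coeff_monomial,
            Finsupp.single_add_single_eq_single_add_single (one_ne_zero) (one_ne_zero)]
      have hspan : Submodule.span k (Set.range (gen k)) ≤ LinearMap.ker φ := by
        rw [Submodule.span_le]
        rintro x ⟨t, rfl⟩
        exact hker t
      have h0 : φ (X (pairIdx 3 0 1) * X (pairIdx 3 2 3) -
          X (pairIdx 3 0 2) * X (pairIdx 3 1 3)) = 0 := hspan (hWS hq)
      have h2 : φ (X (pairIdx 3 0 1) * X (pairIdx 3 2 3) -
          X (pairIdx 3 0 2) * X (pairIdx 3 1 3)) = 2 := by
        simp (config := { decide := true }) [hφ, XX_eq, hm1, hm2, lcoeff_apply,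
          coeff_monomial,
          Finsupp.single_add_single_eq_single_add_single (one_ne_zero) (one_ne_zero)]
        norm_num
      rw [h2] at h0
      have : ((2 : ℕ) : k) = 0 := by exact_mod_cast h0
      rw [CharP.cast_eq_zero_iff k 3 2] at this
      omega
end

section
/- Let k be an algebraically closed field with char k ≠ 2. If Θ = L₁² − L₂L₃ is a nonzero rank-≤3 quadric (L_i linear forms in the z-coordinates) vanishing on the second Veronese embedding ν₂(Pⁿ) ⊂ P^N, then there exist quadratic forms q₁,q₂,q₃ in k[x_0,…,x_n] with q₁² = q₂q₃, and consequently q₁ = l₁l₂, q₂ = c·l₁², q₃ = c^{-1}·l₂² for some linear forms l₁,l₂ and nonzero constant c; hence Θ lies in the image of the Q-map, i.e., Θ is a scalar multiple of f(l₁²)f(l₂²) − f(l₁l₂)² up to the identification. -/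
open MvPolynomial

/-- The linear form in `x₀,…,x_n` with coefficient vector `a`. -/
noncomputable def lin (k : Type*) [CommRing k] (n : ℕ) (a : Fin (n + 1) → k) :
    MvPolynomial (Fin (n + 1)) k :=
  ∑ i, C (a i) * X i

/-!
Write `qᵢ = ν₂^#(Lᵢ)`. The monomials `x^I` are linearly independent, so `ν₂^#` is injective on
linear forms, and `Θ ≠ 0` forces `q₁` not to be a scalar multiple of `q₂`. In the UFD
`k[x₀,…,xₙ]` pick an irreducible factor `p` of `q₂ = p b`; it divides `q₁ = p a`. Factors of a
homogeneous polynomial `u` are homogeneous, because the leading and trailing degrees in `t` of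
`u(t x)` (`gradedPoly u`) add up under multiplication. So either `p` is a quadric, and then `q₁`
and `q₂` are proportional, or `p`, `a`, `b` are linear forms with `p a² = b q₃`. The prime `b`
cannot divide `a` (proportionality again), so `b = c p`, whence `q₂ = c p²`, `q₃ = c⁻¹ a²`,
and pulling back along `ν₂^#` gives `Θ = -(f(p²) f(a²) - f(p a)²)`.
-/

namespace MvPolynomial

variable {σ R : Type*}

noncomputable def gradedPoly [CommSemiring R] :
    MvPolynomial σ R →ₐ[R] Polynomial (MvPolynomial σ R) :=
  aeval fun i => Polynomial.C (X i) * Polynomial.X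

section CommSemiring

variable [CommSemiring R]

theorem gradedPoly_monomial (m : σ →₀ ℕ) (c : R) :
    gradedPoly (monomial m c) = Polynomial.C (monomial m c) * Polynomial.X ^ m.degree := by
  rw [gradedPoly, aeval_monomial, monomial_eq]
  simp only [mul_pow, Finsupp.prod, Finset.prod_mul_distrib, map_prod, map_pow, map_mul,
    Finset.prod_pow_eq_pow_sum, Finsupp.degree_apply]
  rw [show algebraMap R (Polynomial (MvPolynomial σ R)) c = Polynomial.C (C c) from rfl]
  ring

theorem coeff_gradedPoly (u : MvPolynomial σ R) (j : ℕ) :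
    (gradedPoly u).coeff j = homogeneousComponent j u := by
  induction u using MvPolynomial.induction_on' with
  | monomial m c =>
    rw [gradedPoly_monomial, Polynomial.coeff_C_mul_X_pow,
      homogeneousComponent_of_mem (isHomogeneous_monomial c rfl)]
  | add p q hp hq => rw [map_add, Polynomial.coeff_add, hp, hq, map_add]

theorem gradedPoly_of_isHomogeneous {u : MvPolynomial σ R} {n : ℕ} (hu : u.IsHomogeneous n) :
    gradedPoly u = Polynomial.monomial n u := by
  ext1 j
  rw [coeff_gradedPoly, homogeneousComponent_of_mem hu, Polynomial.coeff_monomial]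
  exact if_congr eq_comm rfl rfl

theorem isHomogeneous_of_natTrailingDegree_gradedPoly {u : MvPolynomial σ R}
    (h : (gradedPoly u).natTrailingDegree = (gradedPoly u).natDegree) :
    u.IsHomogeneous (gradedPoly u).natDegree := by
  intro m hm
  have hcomp : (gradedPoly u).coeff m.degree ≠ 0 := by
    rw [coeff_gradedPoly]
    intro h0
    simpa [coeff_homogeneousComponent, hm] using congrArg (coeff m) h0
  have := Polynomial.natTrailingDegree_le_of_ne_zero hcomp
  have := Polynomial.le_natDegree_of_ne_zero hcomp
  show Finsupp.weight (fun _ => 1) m = _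
  rw [← Finsupp.degree_eq_weight_one]
  omega

theorem IsHomogeneous.eq_C_coeff_zero {p : MvPolynomial σ R} (hp : p.IsHomogeneous 0) :
    p = C (coeff 0 p) :=
  totalDegree_eq_zero_iff_eq_C.1 ((totalDegree_zero_iff_isHomogeneous _).2 hp)

theorem IsHomogeneous.mem_range_linearCombination_X {p : MvPolynomial σ R}
    (hp : p.IsHomogeneous 1) :
    p ∈ LinearMap.range (Finsupp.linearCombination R (X : σ → MvPolynomial σ R)) := by
  rw [Finsupp.range_linearCombination, ← homogeneousSubmodule_one_eq_span_X]
  exact hp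

end CommSemiring

section IsDomain

variable [CommRing R] [IsDomain R] {p q : MvPolynomial σ R} {m n : ℕ}

theorem IsHomogeneous.exists_of_mul_left (h : (p * q).IsHomogeneous n) (hpq : p * q ≠ 0) :
    ∃ m, p.IsHomogeneous m := by
  have hPQ : gradedPoly p * gradedPoly q = Polynomial.monomial n (p * q) := by
    rw [← map_mul, gradedPoly_of_isHomogeneous h]
  have hPQ0 : gradedPoly p * gradedPoly q ≠ 0 := by
    rwa [hPQ, Ne, Polynomial.monomial_eq_zero_iff]
  have hdeg := congrArg Polynomial.natDegree hPQ
  have htrail := congrArg Polynomial.natTrailingDegree hPQ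
  rw [Polynomial.natDegree_mul (left_ne_zero_of_mul hPQ0) (right_ne_zero_of_mul hPQ0),
    Polynomial.natDegree_monomial_eq _ hpq] at hdeg
  rw [Polynomial.natTrailingDegree_mul (left_ne_zero_of_mul hPQ0) (right_ne_zero_of_mul hPQ0),
    Polynomial.natTrailingDegree_monomial hpq] at htrail
  have := (gradedPoly p).natTrailingDegree_le_natDegree
  have := (gradedPoly q).natTrailingDegree_le_natDegree
  exact ⟨_, isHomogeneous_of_natTrailingDegree_gradedPoly (by omega)⟩

theorem IsHomogeneous.exists_add_eq_of_mul (h : (p * q).IsHomogeneous n) (hpq : p * q ≠ 0) :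
    ∃ i j, i + j = n ∧ p.IsHomogeneous i ∧ q.IsHomogeneous j := by
  obtain ⟨i, hi⟩ := h.exists_of_mul_left hpq
  obtain ⟨j, hj⟩ := (mul_comm p q ▸ h).exists_of_mul_left (mul_comm p q ▸ hpq)
  exact ⟨i, j, (hi.mul hj).inj_right h hpq, hi, hj⟩

theorem IsHomogeneous.of_mul_left (h : (p * q).IsHomogeneous (m + n)) (hp : p.IsHomogeneous m)
    (hpq : p * q ≠ 0) : q.IsHomogeneous n := by
  obtain ⟨i, j, hij, hi, hj⟩ := h.exists_add_eq_of_mul hpq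
  obtain rfl : i = m := hi.inj_right hp (left_ne_zero_of_mul hpq)
  obtain rfl : j = n := by omega
  exact hj

theorem IsHomogeneous.exists_eq_C_of_mul_left (h : (p * q).IsHomogeneous m)
    (hp : p.IsHomogeneous m) (hpq : p * q ≠ 0) : ∃ c, c ≠ 0 ∧ q = C c := by
  have hqC := (h.of_mul_left (n := 0) hp hpq).eq_C_coeff_zero
  refine ⟨coeff 0 q, fun h0 => right_ne_zero_of_mul hpq ?_, hqC⟩
  rw [hqC, h0, map_zero]

end IsDomain

section Field

variable {K : Type*} [Field K] {p : MvPolynomial σ K} {n : ℕ}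

theorem IsHomogeneous.isUnit_iff (hp : p.IsHomogeneous n) (h0 : p ≠ 0) : IsUnit p ↔ n = 0 := by
  rw [isUnit_iff_totalDegree_of_isReduced, hp.totalDegree h0, isUnit_iff_ne_zero,
    and_iff_right_iff_imp]
  rintro rfl h0'
  exact h0 (by rw [hp.eq_C_coeff_zero, h0', map_zero])

theorem IsHomogeneous.prime_of_degree_one (hp : p.IsHomogeneous 1) (h0 : p ≠ 0) : Prime p := by
  refine UniqueFactorizationMonoid.irreducible_iff_prime.1 <|
    irreducible_of_totalDegree_eq_one (hp.totalDegree h0) fun x hx => ?_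
  obtain ⟨d, hd⟩ := ne_zero_iff.1 h0
  exact isUnit_iff_ne_zero.2 fun hx0 => hd (zero_dvd_iff.1 (hx0 ▸ hx d))

theorem exists_linear_factors_of_sq_eq_mul {q₁ q₂ q₃ : MvPolynomial σ K}
    (h₁ : q₁.IsHomogeneous 2) (h₂ : q₂.IsHomogeneous 2) (hq : q₁ ^ 2 = q₂ * q₃)
    (hprop : ∀ c, q₁ ≠ C c * q₂) :
    ∃ (l₁ l₂ : MvPolynomial σ K) (c : K), l₁.IsHomogeneous 1 ∧ l₂.IsHomogeneous 1 ∧ c ≠ 0 ∧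
      q₁ = l₁ * l₂ ∧ q₂ = C c * l₁ ^ 2 ∧ q₃ = C c⁻¹ * l₂ ^ 2 := by
  have hq₁ : q₁ ≠ 0 := by simpa using hprop 0
  have hq₂ : q₂ ≠ 0 := by
    rintro rfl
    exact hq₁ (pow_eq_zero_iff two_ne_zero |>.1 (by rw [hq, zero_mul]))
  obtain ⟨p, hp, b, rfl⟩ :=
    WfDvdMonoid.exists_irreducible_factor (mt (h₂.isUnit_iff hq₂).1 two_ne_zero) hq₂
  obtain ⟨a, rfl⟩ := (UniqueFactorizationMonoid.irreducible_iff_prime.1 hp).dvd_of_dvd_pow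
    (n := 2) ⟨b * q₃, by rw [hq]; ring⟩
  obtain ⟨e, f, hef, hpe, hbf⟩ := h₂.exists_add_eq_of_mul hq₂
  have he : e ≠ 0 := fun he =>
    hp.not_isUnit ((hpe.isUnit_iff (left_ne_zero_of_mul hq₂)).2 he)
  obtain rfl | rfl : e = 2 ∨ e = 1 := by omega
  · obtain ⟨β, hβ, rfl⟩ := h₂.exists_eq_C_of_mul_left hpe hq₂
    obtain ⟨α, -, rfl⟩ := h₁.exists_eq_C_of_mul_left hpe hq₁
    exact absurd (by rw [mul_left_comm, ← map_mul, div_mul_cancel₀ α hβ]) (hprop (α / β))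
  obtain rfl : f = 1 := by omega
  have ha : a.IsHomogeneous 1 := h₁.of_mul_left hpe hq₁
  have hb0 : b ≠ 0 := right_ne_zero_of_mul hq₂
  have hbp := hbf.prime_of_degree_one hb0
  have key : p * a ^ 2 = b * q₃ :=
    mul_left_cancel₀ (left_ne_zero_of_mul hq₁) (by linear_combination hq)
  rcases hbp.dvd_or_dvd ⟨q₃, key⟩ with ⟨s, rfl⟩ | hba
  · obtain ⟨t, ht, rfl⟩ := hpe.exists_eq_C_of_mul_left hbf (left_ne_zero_of_mul hq₂)
    have hCt : C t * C t⁻¹ = (1 : MvPolynomial σ K) := by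
      rw [← map_mul, mul_inv_cancel₀ ht, map_one]
    refine ⟨b * C t, a, t⁻¹, hpe, ha, inv_ne_zero ht, rfl,
      by linear_combination (-(b ^ 2 * C t)) * hCt, ?_⟩
    rw [inv_inv]
    exact mul_left_cancel₀ hb0 (by linear_combination -key)
  · obtain ⟨s, rfl⟩ := hbp.dvd_of_dvd_pow hba
    obtain ⟨t, -, rfl⟩ := ha.exists_eq_C_of_mul_left hbf (right_ne_zero_of_mul hq₁)
    exact absurd (by ring) (hprop t)

end Field

end MvPolynomial

section Veronese

variable {k : Type*} [CommRing k] {n : ℕ}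

theorem ver_eq_monomial (v : VIdx n) :
    ver k n v = monomial (Finsupp.equivFunOnFinite.symm v.1) 1 := by
  rw [monomial_eq, map_one, one_mul, ver, Finsupp.prod_fintype _ _ fun _ => pow_zero _]
  rfl

theorem isHomogeneous_ver (v : VIdx n) : (ver k n v).IsHomogeneous 2 := by
  have := IsHomogeneous.prod Finset.univ (fun i => (X i : MvPolynomial (Fin (n + 1)) k) ^ v.1 i)
    (fun i => v.1 i) fun i _ => isHomogeneous_X_pow i (v.1 i)
  rwa [v.2] at this

theorem linearIndependent_ver [Nontrivial k] : LinearIndependent k (ver k n) := by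
  have hinj : Function.Injective fun v : VIdx n => Finsupp.equivFunOnFinite.symm v.1 :=
    fun v w h => Subtype.ext (Finsupp.equivFunOnFinite.symm.injective h)
  have := (basisMonomials (Fin (n + 1)) k).linearIndependent.comp _ hinj
  rw [coe_basisMonomials] at this
  exact (funext ver_eq_monomial : ver k n = _) ▸ this

theorem eq_zero_of_aeval_ver_eq_zero [Nontrivial k] {L : MvPolynomial (VIdx n) k}
    (hL : L.IsHomogeneous 1) (h : aeval (ver k n) L = 0) : L = 0 := by
  obtain ⟨c, rfl⟩ := hL.mem_range_linearCombination_X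
  have hc : Finsupp.linearCombination k (ver k n) c = 0 := by
    have := Finsupp.apply_linearCombination k (aeval (ver k n)).toLinearMap X c
    simp_all [Function.comp_def]
  rw [linearIndependent_iff.1 linearIndependent_ver c hc, map_zero]

theorem eq_of_aeval_ver_eq [Nontrivial k] {L M : MvPolynomial (VIdx n) k}
    (hL : L.IsHomogeneous 1) (hM : M.IsHomogeneous 1)
    (h : aeval (ver k n) L = aeval (ver k n) M) : L = M :=
  sub_eq_zero.1 (eq_zero_of_aeval_ver_eq_zero (hL.sub hM) (by rw [map_sub, h, sub_self]))

theorem isHomogeneous_aeval_ver {L : MvPolynomial (VIdx n) k} (hL : L.IsHomogeneous 1) :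
    (aeval (ver k n) L).IsHomogeneous 2 :=
  hL.aeval _ isHomogeneous_ver

theorem exists_eq_lin_of_isHomogeneous {p : MvPolynomial (Fin (n + 1)) k}
    (hp : p.IsHomogeneous 1) : ∃ a, p = lin k n a := by
  obtain ⟨a, rfl⟩ := hp.mem_range_linearCombination_X
  exact ⟨a, by simp [lin, Finsupp.linearCombination_apply, Finsupp.sum_fintype, smul_eq_C_mul]⟩

theorem ver_pairIdx (i j : Fin (n + 1)) : ver k n (pairIdx n i j) = X i * X j := by
  classical
  have : ∀ t, (pairIdx n i j).1 t = (if t = i then 1 else 0) + (if t = j then 1 else 0) :=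
    fun t => rfl
  simp only [ver, this, pow_add, Finset.prod_mul_distrib]
  congr 1
  · rw [Finset.prod_eq_single i] <;> simp +contextual
  · rw [Finset.prod_eq_single j] <;> simp +contextual

theorem aeval_ver_fprod (a b : Fin (n + 1) → k) :
    aeval (ver k n) (fprod k n a b) = lin k n a * lin k n b := by
  simp only [fprod, lin, Finset.sum_mul_sum, map_sum, map_mul, aeval_C, aeval_X, ver_pairIdx,
    algebraMap_eq]
  exact Finset.sum_congr rfl fun _ _ => Finset.sum_congr rfl fun _ _ => by ring

theorem isHomogeneous_fprod (a b : Fin (n + 1) → k) : (fprod k n a b).IsHomogeneous 1 :=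
  IsHomogeneous.sum _ _ _ fun _ _ =>
    IsHomogeneous.sum _ _ _ fun _ _ => isHomogeneous_C_mul_X _ _

end Veronese

theorem aeval_ver_ne_C_mul_of_sq_sub_mul_ne_zero {k : Type*} [Field k] {n : ℕ}
    {L₁ L₂ L₃ : MvPolynomial (VIdx n) k}
    (hL₁ : L₁.IsHomogeneous 1) (hL₂ : L₂.IsHomogeneous 1) (hL₃ : L₃.IsHomogeneous 1)
    (hne : L₁ ^ 2 - L₂ * L₃ ≠ 0)
    (hq : aeval (ver k n) L₁ ^ 2 = aeval (ver k n) L₂ * aeval (ver k n) L₃) (c : k) :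
    aeval (ver k n) L₁ ≠ C c * aeval (ver k n) L₂ := by
  intro h
  have e₁ := eq_of_aeval_ver_eq hL₁ (hL₂.C_mul c) (by simpa using h)
  have h₂₃ : aeval (ver k n) L₂ * (aeval (ver k n) L₃ - C c * aeval (ver k n) L₁) = 0 := by
    linear_combination -hq + aeval (ver k n) L₁ * h
  rcases mul_eq_zero.1 h₂₃ with h₂ | h₃
  · exact hne (by rw [e₁, eq_zero_of_aeval_ver_eq_zero hL₂ h₂]; ring)
  · have e₃ := eq_of_aeval_ver_eq hL₃ (hL₁.C_mul c) (by simpa [sub_eq_zero] using h₃)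
    exact hne (by rw [e₃, e₁]; ring)

theorem stmt_15_general {k : Type*} [Field k] (n : ℕ)
    (L₁ L₂ L₃ : MvPolynomial (VIdx n) k)
    (hL₁ : L₁.IsHomogeneous 1) (hL₂ : L₂.IsHomogeneous 1) (hL₃ : L₃.IsHomogeneous 1)
    (hne : L₁ ^ 2 - L₂ * L₃ ≠ 0)
    (hvan : aeval (ver k n) (L₁ ^ 2 - L₂ * L₃) = 0) :
    (aeval (ver k n) L₁) ^ 2 = aeval (ver k n) L₂ * aeval (ver k n) L₃ ∧
    ∃ (a b : Fin (n + 1) → k) (c μ : k), c ≠ 0 ∧ μ ≠ 0 ∧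
      aeval (ver k n) L₁ = lin k n a * lin k n b ∧
      aeval (ver k n) L₂ = c • (lin k n a) ^ 2 ∧
      aeval (ver k n) L₃ = c⁻¹ • (lin k n b) ^ 2 ∧
      L₁ ^ 2 - L₂ * L₃ = μ • Qquad k n a b := by
  have hq : aeval (ver k n) L₁ ^ 2 = aeval (ver k n) L₂ * aeval (ver k n) L₃ := by
    rwa [map_sub, map_mul, map_pow, sub_eq_zero] at hvan
  refine ⟨hq, ?_⟩
  obtain ⟨l₁, l₂, c, hl₁, hl₂, hc, h₁, h₂, h₃⟩ :=
    exists_linear_factors_of_sq_eq_mul (isHomogeneous_aeval_ver hL₁)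
      (isHomogeneous_aeval_ver hL₂) hq (aeval_ver_ne_C_mul_of_sq_sub_mul_ne_zero hL₁ hL₂ hL₃ hne hq)
  obtain ⟨a, rfl⟩ := exists_eq_lin_of_isHomogeneous hl₁
  obtain ⟨b, rfl⟩ := exists_eq_lin_of_isHomogeneous hl₂
  have e₁ := eq_of_aeval_ver_eq hL₁ (isHomogeneous_fprod a b) (by rw [h₁, aeval_ver_fprod])
  have e₂ := eq_of_aeval_ver_eq hL₂ ((isHomogeneous_fprod a a).C_mul c)
    (by rw [h₂, map_mul, aeval_C, algebraMap_eq, aeval_ver_fprod, sq])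
  have e₃ := eq_of_aeval_ver_eq hL₃ ((isHomogeneous_fprod b b).C_mul c⁻¹)
    (by rw [h₃, map_mul, aeval_C, algebraMap_eq, aeval_ver_fprod, sq])
  refine ⟨a, b, c, -1, hc, neg_ne_zero.2 one_ne_zero, h₁, by rw [h₂, smul_eq_C_mul],
    by rw [h₃, smul_eq_C_mul], ?_⟩
  have hC : C c * C c⁻¹ = (1 : MvPolynomial (VIdx n) k) := by
    rw [← map_mul, mul_inv_cancel₀ hc, map_one]
  rw [e₁, e₂, e₃, Qquad, neg_one_smul]
  linear_combination (-(fprod k n a a * fprod k n b b)) * hC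

/-- If `Θ = L₁² − L₂L₃` is a nonzero rank-`≤3` quadric vanishing on `ν₂(Pⁿ)`, then the
quadratic forms `qᵢ = ν₂^#(Lᵢ)` satisfy `q₁² = q₂q₃`, and there are linear forms `l₁, l₂`
and a nonzero constant `c` with `q₁ = l₁l₂`, `q₂ = c·l₁²`, `q₃ = c⁻¹·l₂²`; hence `Θ` is a
(nonzero) scalar multiple of the Q-map quadric `f(l₁²)f(l₂²) − f(l₁l₂)²`. -/
theorem stmt_15 {k : Type*} [Field k] [IsAlgClosed k] (hchar : ringChar k ≠ 2) (n : ℕ)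
    (L₁ L₂ L₃ : MvPolynomial (VIdx n) k)
    (hL₁ : L₁.IsHomogeneous 1) (hL₂ : L₂.IsHomogeneous 1) (hL₃ : L₃.IsHomogeneous 1)
    (hne : L₁ ^ 2 - L₂ * L₃ ≠ 0)
    (hvan : aeval (ver k n) (L₁ ^ 2 - L₂ * L₃) = 0) :
    (aeval (ver k n) L₁) ^ 2 = aeval (ver k n) L₂ * aeval (ver k n) L₃ ∧
    ∃ (a b : Fin (n + 1) → k) (c μ : k), c ≠ 0 ∧ μ ≠ 0 ∧
      aeval (ver k n) L₁ = lin k n a * lin k n b ∧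
      aeval (ver k n) L₂ = c • (lin k n a) ^ 2 ∧
      aeval (ver k n) L₃ = c⁻¹ • (lin k n b) ^ 2 ∧
      L₁ ^ 2 - L₂ * L₃ = μ • Qquad k n a b :=
  stmt_15_general n L₁ L₂ L₃ hL₁ hL₂ hL₃ hne hvan
end
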